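/- Let f be a strongly hyperbolic function and let 0 < x₁ < x₂, y₂ < y₁ < 0 with 1 < y₂/y₁ < x₂/x₁. Then there exists b₀ > 0 such that (f(x₂+b₀) − f(b₀))/(f(x₁+b₀) − f(b₀)) = y₂/y₁. -/

import Mathlib

/-!
The ratio `g b = (f (x₂ + b) - f b) / (f (x₁ + b) - f b)` tends to `1` as `b → 0⁺`, because
`f b → ∞`, and to `x₂ / x₁` as `b → ∞`, so by the intermediate value theorem it takes every value
in between.

For the limit at infinity, convexity traps the secant slope of `f` over `[b, b + x]` between
`f' b` and `f' (b + x)`, so it suffices that `f' (b + s) / f' b → 1`. By log-convexity of `|f'|`,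
`log |f' (b + s)| - log |f' b|` is nondecreasing, and it is `≤ 0`. If it stayed below some `a < 0`,
then `f (· + s) - exp a * f` would be nondecreasing with limit `0`, hence `≤ 0`, so that
`f (b + s) / f b ≤ exp a < 1`, contradicting `f (b + s) / f b → 1`.
-/

open Filter Set Real

/-- A strongly hyperbolic function `f : (0,∞) → (0,∞)`. -/
def StronglyHyperbolic (f : ℝ → ℝ) : Prop :=
  (∀ x ∈ Set.Ioi (0:ℝ), 0 < f x) ∧
  Filter.Tendsto f (nhdsWithin 0 (Set.Ioi 0)) Filter.atTop ∧
  Filter.Tendsto f Filter.atTop (nhds 0) ∧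
  StrictConvexOn ℝ (Set.Ioi 0) f ∧
  (∀ b : ℝ, Filter.Tendsto (fun x => f (x + b) / f x) Filter.atTop (nhds 1)) ∧
  (∀ x ∈ Set.Ioi (0:ℝ), DifferentiableAt ℝ f x) ∧
  StrictConvexOn ℝ (Set.Ioi 0) (fun x => Real.log |deriv f x|)

open Topology

lemma ConvexOn.apply_add_sub_apply_le {𝕜 : Type*} [Field 𝕜] [LinearOrder 𝕜]
    [IsStrictOrderedRing 𝕜] {S : Set 𝕜} {f : 𝕜 → 𝕜} (hf : ConvexOn 𝕜 S f) {x y c : 𝕜}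
    (hx : x ∈ S) (hyc : y + c ∈ S) (hc : 0 ≤ c) (hxy : x ≤ y) :
    f (x + c) - f x ≤ f (y + c) - f y := by
  rcases hc.eq_or_lt with rfl | hc
  · simp
  rcases hxy.eq_or_lt with rfl | hxy
  · rfl
  have hxc : x + c ∈ S := hf.1.ordConnected.out hx hyc ⟨by linarith, by linarith⟩
  have hy : y ∈ S := hf.1.ordConnected.out hx hyc ⟨hxy.le, by linarith⟩
  have hslope : slope f x (x + c) ≤ slope f y (y + c) :=
    calc slope f x (x + c)
        ≤ slope f x (y + c) := hf.slope_mono hx ⟨hxc, by simp [hc.ne']⟩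
          ⟨hyc, (by linarith : x < y + c).ne'⟩ (by linarith)
      _ = slope f (y + c) x := slope_comm _ _ _
      _ ≤ slope f (y + c) y := hf.slope_mono hyc ⟨hx, (by linarith : x < y + c).ne⟩
          ⟨hy, by simp [hc.ne']⟩ hxy.le
      _ = slope f y (y + c) := slope_comm _ _ _
  simpa [slope_def_field, div_le_div_iff_of_pos_right hc] using hslope

lemma ConvexOn.deriv_neg_of_tendsto_atTop_zero {f : ℝ → ℝ} (hf : ConvexOn ℝ (Ioi 0) f)
    (htop : Tendsto f atTop (𝓝 0)) {x : ℝ} (hx : 0 < x) (hfx : 0 < f x)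
    (hd : DifferentiableAt ℝ f x) : deriv f x < 0 := by
  by_contra! h
  have hge : ∀ᶠ y in atTop, f x ≤ f y := by
    filter_upwards [eventually_gt_atTop x] with y hxy
    have := h.trans (hf.deriv_le_slope hx (hx.trans hxy) hxy hd)
    rw [slope_def_field, le_div_iff₀ (sub_pos.2 hxy)] at this
    linarith
  exact hfx.not_ge (ge_of_tendsto htop hge)

lemma apply_add_le_mul_apply_of_mul_deriv_le {f : ℝ → ℝ} {s c : ℝ} (hs : 0 ≤ s)
    (hd : ∀ t ∈ Ioi (0:ℝ), DifferentiableAt ℝ f t) (htop : Tendsto f atTop (𝓝 0))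
    (hderiv : ∀ t ∈ Ioi (0:ℝ), c * deriv f t ≤ deriv f (t + s)) {t : ℝ} (ht : 0 < t) :
    f (t + s) ≤ c * f t := by
  set u : ℝ → ℝ := fun t => f (t + s) - c * f t
  have hu : ∀ t ∈ Ioi (0:ℝ), HasDerivAt u (deriv f (t + s) - c * deriv f t) t :=
    fun t (ht : 0 < t) => ((hd (t + s) (mem_Ioi.2 (by linarith))).hasDerivAt.comp_add_const t s).sub
      ((hd t ht).hasDerivAt.const_mul c)
  have hmono : MonotoneOn u (Ioi 0) :=
    monotoneOn_of_hasDerivWithinAt_nonneg (convex_Ioi 0)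
      (fun t ht => (hu t ht).continuousAt.continuousWithinAt)
      (fun t ht => (hu t (interior_subset ht)).hasDerivWithinAt)
      (fun t ht => sub_nonneg.2 (hderiv t (interior_subset ht)))
  have hlim : Tendsto u atTop (𝓝 0) := by
    simpa using (htop.comp (tendsto_atTop_add_const_right _ s tendsto_id)).sub
      (htop.const_mul c)
  have hu_nonpos : u t ≤ 0 := ge_of_tendsto hlim <| by
    filter_upwards [eventually_ge_atTop t] with y hy using hmono ht (ht.trans_le hy) hy
  exact sub_nonpos.1 hu_nonpos

lemma ConvexOn.tendsto_slope_div_deriv {f : ℝ → ℝ} (hf : ConvexOn ℝ (Ioi 0) f)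
    (hd : ∀ t ∈ Ioi (0:ℝ), DifferentiableAt ℝ f t) (hneg : ∀ t ∈ Ioi (0:ℝ), deriv f t < 0)
    {x : ℝ} (hx : 0 < x) (hratio : Tendsto (fun b => deriv f (b + x) / deriv f b) atTop (𝓝 1)) :
    Tendsto (fun b => slope f b (b + x) / deriv f b) atTop (𝓝 1) := by
  refine tendsto_of_tendsto_of_tendsto_of_le_of_le' hratio tendsto_const_nhds ?_ ?_ <;>
    filter_upwards [eventually_gt_atTop 0] with b hb
  all_goals have hbx : b < b + x := lt_add_of_pos_right b hx
  · exact div_le_div_of_nonpos_of_le (hneg b hb).le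
      (hf.slope_le_deriv hb (hb.trans hbx) hbx (hd _ (hb.trans hbx)))
  · exact (div_le_one_of_neg (hneg b hb)).2 (hf.deriv_le_slope hb (hb.trans hbx) hbx (hd b hb))

lemma tendsto_sub_div_sub_of_tendsto_atTop {α : Type*} {l : Filter α} {F A B : α → ℝ}
    {a b : ℝ} (hF : Tendsto F l atTop) (hA : Tendsto A l (𝓝 a)) (hB : Tendsto B l (𝓝 b)) :
    Tendsto (fun x => (A x - F x) / (B x - F x)) l (𝓝 1) := by
  have key := ((hA.div_atTop hF).sub_const 1).div ((hB.div_atTop hF).sub_const 1) (by norm_num)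
  rw [show ((0:ℝ) - 1) / (0 - 1) = 1 by norm_num] at key
  refine key.congr' ?_
  filter_upwards [hF.eventually_gt_atTop 0] with x hx
  simp only [Pi.div_apply]
  rw [div_sub_one hx.ne', div_sub_one hx.ne', div_div_div_cancel_right₀ hx.ne']

namespace StronglyHyperbolic

variable {f : ℝ → ℝ}

lemma deriv_neg (hf : StronglyHyperbolic f) {x : ℝ} (hx : 0 < x) : deriv f x < 0 := by
  obtain ⟨hpos, -, htop, hconv, -, hdiff, -⟩ := hf
  exact hconv.convexOn.deriv_neg_of_tendsto_atTop_zero htop hx (hpos x hx) (hdiff x hx)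

lemma continuousOn (hf : StronglyHyperbolic f) : ContinuousOn f (Ioi 0) := fun x hx =>
  (hf.2.2.2.2.2.1 x hx).continuousAt.continuousWithinAt

lemma strictAntiOn (hf : StronglyHyperbolic f) : StrictAntiOn f (Ioi 0) :=
  strictAntiOn_of_deriv_neg (convex_Ioi 0) hf.continuousOn fun _ hx =>
    hf.deriv_neg (interior_subset hx)

lemma tendsto_log_abs_deriv_add_sub (hf : StronglyHyperbolic f) {s : ℝ} (hs : 0 < s) :
    Tendsto (fun x => log |deriv f (x + s)| - log |deriv f x|) atTop (𝓝 0) := by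
  have hneg {x : ℝ} (hx : 0 < x) : deriv f x < 0 := hf.deriv_neg hx
  obtain ⟨hpos, -, htop, hconv, hratio, hdiff, hlog⟩ := hf
  set h : ℝ → ℝ := fun x => log |deriv f (x + s)| - log |deriv f x|
  have hmem {x : ℝ} (hx : 0 < x) : x + s ∈ Ioi (0:ℝ) := mem_Ioi.2 (by linarith)
  have hmono : MonotoneOn h (Ioi 0) := fun x hx y hy hxy =>
    hlog.convexOn.apply_add_sub_apply_le hx (hmem hy) hs.le hxy
  have hle {x : ℝ} (hx : 0 < x) : h x ≤ 0 := by
    have hd := hconv.convexOn.monotoneOn_deriv hdiff hx (hmem hx) (by linarith)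
    exact sub_nonpos.2 <| log_le_log (abs_pos.2 (hneg (hmem hx)).ne)
      (abs_le_abs_of_nonpos (hneg (hmem hx)).le hd)
  refine tendsto_order.2 ⟨fun a ha => ?_, fun a ha => ?_⟩
  swap
  · exact (eventually_gt_atTop 0).mono fun _ hx => (hle hx).trans_lt ha
  by_contra hfreq
  -- `h` is nondecreasing, so being `≤ a` arbitrarily far out forces `h ≤ a` everywhere.
  have hall {t : ℝ} (ht : 0 < t) : h t ≤ a := by
    obtain ⟨x, hx, htx⟩ :=
      ((not_eventually.1 hfreq).and_eventually (eventually_ge_atTop t)).exists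
    exact (hmono ht (ht.trans_le htx) htx).trans (not_lt.1 hx)
  have hshift : ∀ t ∈ Ioi (0:ℝ), exp a * deriv f t ≤ deriv f (t + s) := fun t ht => by
    have habs : |deriv f (t + s)| ≤ exp a * |deriv f t| := by
      rw [← exp_log (abs_pos.2 (hneg ht).ne), ← exp_add, ← log_le_iff_le_exp
        (abs_pos.2 (hneg (hmem ht)).ne)]
      linarith [hall ht]
    rw [abs_of_neg (hneg ht), abs_of_neg (hneg (hmem ht))] at habs
    linarith
  have hdecay : ∀ᶠ t in atTop, f (t + s) / f t ≤ exp a := by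
    filter_upwards [eventually_gt_atTop 0] with t ht
    exact (div_le_iff₀ (hpos t ht)).2
      (apply_add_le_mul_apply_of_mul_deriv_le hs.le hdiff htop hshift ht)
  exact (exp_lt_one_iff.2 ha).not_ge (le_of_tendsto (hratio s) hdecay)

lemma tendsto_deriv_add_div_deriv (hf : StronglyHyperbolic f) {s : ℝ} (hs : 0 < s) :
    Tendsto (fun x => deriv f (x + s) / deriv f x) atTop (𝓝 1) := by
  have hexp := (hf.tendsto_log_abs_deriv_add_sub hs).rexp
  rw [exp_zero] at hexp
  refine hexp.congr' ?_
  filter_upwards [eventually_gt_atTop 0] with x hx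
  have hx' : deriv f (x + s) < 0 := hf.deriv_neg (by linarith)
  rw [exp_sub, exp_log (abs_pos.2 hx'.ne), exp_log (abs_pos.2 (hf.deriv_neg hx).ne),
    abs_of_neg hx', abs_of_neg (hf.deriv_neg hx), neg_div_neg_eq]

lemma tendsto_secant_ratio_atTop (hf : StronglyHyperbolic f) {x₁ x₂ : ℝ} (hx₁ : 0 < x₁)
    (hx₂ : 0 < x₂) :
    Tendsto (fun b => (f (x₂ + b) - f b) / (f (x₁ + b) - f b)) atTop (𝓝 (x₂ / x₁)) := by
  have hconv : ConvexOn ℝ (Ioi 0) f := hf.2.2.2.1.convexOn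
  have hslope {x : ℝ} (hx : 0 < x) :=
    hconv.tendsto_slope_div_deriv hf.2.2.2.2.2.1 (fun _ => hf.deriv_neg) hx
      (hf.tendsto_deriv_add_div_deriv hx)
  have key := ((hslope hx₂).const_mul x₂).div ((hslope hx₁).const_mul x₁) (by simp [hx₁.ne'])
  simp only [mul_one] at key
  refine key.congr' ?_
  filter_upwards [eventually_gt_atTop 0] with b hb
  have := (hf.deriv_neg hb).ne
  simp only [Pi.div_apply, slope_def_field, add_sub_cancel_left, add_comm b]
  field_simp

lemma tendsto_secant_ratio_nhdsGT_zero (hf : StronglyHyperbolic f) {x₁ x₂ : ℝ} (hx₁ : 0 < x₁)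
    (hx₂ : 0 < x₂) :
    Tendsto (fun b => (f (x₂ + b) - f b) / (f (x₁ + b) - f b)) (𝓝[>] 0) (𝓝 1) := by
  have hshift {x : ℝ} (hx : 0 < x) : Tendsto (fun b => f (x + b)) (𝓝[>] 0) (𝓝 (f x)) :=
    ((hf.continuousOn.continuousAt (Ioi_mem_nhds hx)).tendsto.comp
      ((continuous_const_add x).tendsto' 0 x (add_zero x))).mono_left nhdsWithin_le_nhds
  exact tendsto_sub_div_sub_of_tendsto_atTop hf.2.1 (hshift hx₂) (hshift hx₁)

lemma continuousOn_secant_ratio (hf : StronglyHyperbolic f) {x₁ x₂ : ℝ} (hx₁ : 0 < x₁)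
    (hx₂ : 0 ≤ x₂) :
    ContinuousOn (fun b => (f (x₂ + b) - f b) / (f (x₁ + b) - f b)) (Ioi 0) := by
  have hshift {x : ℝ} (hx : 0 ≤ x) : ContinuousOn (fun b => f (x + b)) (Ioi 0) :=
    hf.continuousOn.comp (continuous_const_add x).continuousOn fun b (hb : 0 < b) =>
      mem_Ioi.2 (by linarith)
  refine ((hshift hx₂).sub hf.continuousOn).div ((hshift hx₁.le).sub hf.continuousOn) ?_
  intro b (hb : 0 < b)
  exact sub_ne_zero.2 (hf.strictAntiOn hb (mem_Ioi.2 (by linarith)) (by linarith)).ne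

end StronglyHyperbolic

theorem stmt16_general (f : ℝ → ℝ) (hf : StronglyHyperbolic f) (x₁ x₂ y₁ y₂ : ℝ)
    (hx1 : 0 < x₁) (hx12 : x₁ < x₂)
    (hr1 : 1 < y₂ / y₁) (hr2 : y₂ / y₁ < x₂ / x₁) :
    ∃ b₀ > (0:ℝ), (f (x₂ + b₀) - f b₀) / (f (x₁ + b₀) - f b₀) = y₂ / y₁ := by
  have hx2 : 0 < x₂ := hx1.trans hx12
  obtain ⟨b₀, hb₀, hg⟩ := isPreconnected_Ioi.intermediate_value_Ioo (l₁ := 𝓝[>] 0) inf_le_right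
    (le_principal_iff.2 (Ioi_mem_atTop 0)) (hf.continuousOn_secant_ratio hx1 hx2.le)
    (hf.tendsto_secant_ratio_nhdsGT_zero hx1 hx2) (hf.tendsto_secant_ratio_atTop hx1 hx2)
    ⟨hr1, hr2⟩
  exact ⟨b₀, hb₀, hg⟩

theorem stmt16 (f : ℝ → ℝ) (hf : StronglyHyperbolic f) (x₁ x₂ y₁ y₂ : ℝ)
    (hx1 : 0 < x₁) (hx12 : x₁ < x₂) (hy21 : y₂ < y₁) (hy1 : y₁ < 0)
    (hr1 : 1 < y₂ / y₁) (hr2 : y₂ / y₁ < x₂ / x₁) :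
    ∃ b₀ > (0:ℝ), (f (x₂ + b₀) - f b₀) / (f (x₁ + b₀) - f b₀) = y₂ / y₁ :=
  stmt16_general f hf x₁ x₂ y₁ y₂ hx1 hx12 hr1 hr2
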